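/- arXiv:math/0408111 — 3 statements merged into one kernel-verified Lean document; each statement's English description precedes it below -/
import Mathlib

section
/- Suppose G is generated by finite subgroups G_1 and G_2 with G_{12} = G_1 ∩ G_2 of index 3 in both, and no non-trivial subgroup of G_{12} is normal in G. If N is a normal subgroup of G containing ⟨O^2(G_1), O^2(G_2)⟩, then G = G_{12}·N, and moreover N is generated by N∩G_1 and N∩G_2, with [N∩G_1 : N∩G_{12}] = [N∩G_2 : N∩G_{12}] = 3, and no non-trivial subgroup of N∩G_{12} is normal in both N∩G_1 and N∩G_2. -/
/-- `O^2(H)`: the smallest normal subgroup of a finite group `H` with 2-group quotient,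
realized as the subgroup generated by the elements of `H` of odd order. -/
def oddCore {G : Type*} [Group G] (H : Subgroup G) : Subgroup G :=
  Subgroup.closure {g : G | g ∈ H ∧ Odd (orderOf g)}

/-!
An element of order 3 of `G_i` lies in `O^2(G_i)` but not in the 2-group `G₁₂`, and `G₁₂` is
maximal in `G_i` (prime index), so `G_i = G₁₂ (N ∩ G_i)`. Hence `G = G₁₂ N₀` with
`N₀ = ⟨N ∩ G₁, N ∩ G₂⟩`; `N₀` is normalized by `G₁₂` and by itself, so it is normal, and the
Dedekind law gives `N₀ = N`. Both `G₁₂ N` and `G_i N` are all of `G`, so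
`[G₁₂ : N ∩ G₁₂] = [G : N] = [G_i : N ∩ G_i]`, which transfers the index 3 to `N`. Finally a
subgroup of `N ∩ G₁₂` normalized by `N ∩ G₁` and `N ∩ G₂` is normalized by `N`, so all its
conjugates under `G = G₁₂ N` lie in `G₁₂`: its normal closure is a normal subgroup of `G` inside
`G₁₂`, hence trivial.
-/

open Subgroup
open scoped Pointwise

section

variable {G : Type*} [Group G]

theorem oddCore_le (H : Subgroup G) : oddCore H ≤ H :=
  (closure_le H).2 fun _ hg => hg.1

theorem sup_oddCore_eq {P H : Subgroup G} [Finite H] (hPH : P ≤ H) (hP : IsPGroup 2 P)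
    {q : ℕ} (hq : q.Prime) (hq2 : q ≠ 2) (hidx : P.relIndex H = q) : P ⊔ oddCore H = H := by
  have := Fact.mk hq
  obtain ⟨x, hx⟩ := exists_prime_orderOf_dvd_card' q (hidx ▸ relIndex_dvd_card P H)
  have hxq : orderOf (x : G) = q := (orderOf_coe x).trans hx
  have hx_mem : (x : G) ∈ oddCore H := subset_closure ⟨x.2, hxq ▸ hq.odd_of_ne_two hq2⟩
  have hx_not_mem : (x : G) ∉ P := fun hxP => by
    obtain ⟨k, hk⟩ := IsPGroup.iff_orderOf.mp hP ⟨x, hxP⟩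
    have hq_dvd : q ∣ 2 ^ k := hxq ▸ ((orderOf_coe _).trans hk).dvd
    exact hq2 ((Nat.prime_dvd_prime_iff_eq hq Nat.prime_two).mp (hq.dvd_of_dvd_pow hq_dvd))
  set J := P ⊔ oddCore H
  have hJH : J ≤ H := sup_le hPH (oddCore_le H)
  have hmul : P.relIndex J * J.relIndex H = q :=
    (relIndex_mul_relIndex P J H le_sup_left hJH).trans hidx
  rcases hq.eq_one_or_self_of_dvd _ (Dvd.intro_left _ hmul) with h | h
  · exact hJH.antisymm (relIndex_eq_one.mp h)
  · rw [h, Nat.mul_eq_right hq.ne_zero] at hmul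
    exact absurd (relIndex_eq_one.mp hmul (mem_sup_right hx_mem)) hx_not_mem

theorem sup_inf_eq_of_oddCore_le {P H N : Subgroup G} [Finite H] (hPH : P ≤ H)
    (hP : IsPGroup 2 P) {q : ℕ} (hq : q.Prime) (hq2 : q ≠ 2) (hidx : P.relIndex H = q)
    (hN : oddCore H ≤ N) : P ⊔ (N ⊓ H) = H :=
  le_antisymm (sup_le hPH inf_le_right) <|
    (sup_oddCore_eq hPH hP hq hq2 hidx).ge.trans (sup_le_sup_left (le_inf hN (oddCore_le H)) P)

theorem normal_of_le_normalizer_of_sup_eq_top {P M : Subgroup G} (hP : P ≤ normalizer M)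
    (hPM : P ⊔ M = ⊤) : M.Normal :=
  normalizer_eq_top_iff.mp (top_le_iff.mp (hPM ▸ sup_le hP le_normalizer))

theorem eq_of_le_of_sup_eq_top {P M N : Subgroup G} [M.Normal] (hMN : M ≤ N) (hPM : P ⊔ M = ⊤)
    (hNP : N ⊓ P ≤ M) : M = N := by
  refine hMN.antisymm fun n hn => ?_
  have hn' : n ∈ (M : Set G) * ↑(P ⊓ N) := by
    rw [mul_inf_assoc _ _ _ hMN, ← normal_mul, sup_comm, hPM]
    exact ⟨trivial, hn⟩
  obtain ⟨m, hm, p, hp, rfl⟩ := hn'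
  exact M.mul_mem hm (hNP (inf_comm P N ▸ hp))

theorem relIndex_inf_inf_eq {N H K : Subgroup G} [N.Normal] (hHK : H ≤ K)
    (hsup : K ⊔ N = H ⊔ N) (hN : N.relIndex H ≠ 0) :
    (N ⊓ H).relIndex (N ⊓ K) = H.relIndex K := by
  have hNK : N.relIndex K = N.relIndex H := by
    rw [← relIndex_sup_right K N, hsup, relIndex_sup_right]
  have hmul : H.relIndex (N ⊓ K) * N.relIndex H = N.relIndex H * H.relIndex K := by
    rw [← hNK, relIndex_inf_mul_relIndex, hNK, ← inf_relIndex_left H N,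
      relIndex_mul_relIndex _ _ _ inf_le_left hHK]
  rw [show N ⊓ H = H ⊓ (N ⊓ K) by rw [inf_left_comm, inf_eq_left.mpr hHK], inf_relIndex_right]
  exact Nat.eq_of_mul_eq_mul_right (Nat.pos_of_ne_zero hN) (hmul.trans (mul_comm _ _))

theorem inf_sup_inf_eq_self {P G1 G2 N : Subgroup G} [N.Normal] (hgen : G1 ⊔ G2 = ⊤)
    (hG1 : P ⊔ (N ⊓ G1) = G1) (hG2 : P ⊔ (N ⊓ G2) = G2) : (N ⊓ G1) ⊔ (N ⊓ G2) = N := by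
  set N0 := (N ⊓ G1) ⊔ (N ⊓ G2)
  have hPN0 : P ⊔ N0 = ⊤ := top_le_iff.mp <| hgen ▸
    sup_le (hG1 ▸ sup_le_sup_left le_sup_left P) (hG2 ▸ sup_le_sup_left le_sup_right P)
  have hP1 : P ≤ G1 := hG1 ▸ le_sup_left
  have hP2 : P ≤ G2 := hG2 ▸ le_sup_left
  have hP_norm : P ≤ normalizer N0 :=
    (le_inf (hP1.trans (normal_subgroupOf_iff_le_normalizer_inf.mp inferInstance))
      (hP2.trans (normal_subgroupOf_iff_le_normalizer_inf.mp inferInstance))).trans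
      (normalizer_inf_normalizer_le_normalizer_sup _ _)
  have := normal_of_le_normalizer_of_sup_eq_top hP_norm hPN0
  exact eq_of_le_of_sup_eq_top (sup_le inf_le_left inf_le_left) hPN0
    ((inf_le_inf_left N hP1).trans le_sup_left)

theorem normalClosure_le_of_sup_eq_top {H N K : Subgroup G} [N.Normal] (hHN : H ⊔ N = ⊤)
    (hKH : K ≤ H) (hNK : N ≤ normalizer K) : normalClosure (K : Set G) ≤ H := by
  refine (closure_le H).mpr fun x hx => ?_
  obtain ⟨a, ha, hax⟩ := Group.mem_conjugatesOfSet_iff.mp hx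
  obtain ⟨c, rfl⟩ := isConj_iff.mp hax
  obtain ⟨h, hh, n, hn, rfl⟩ : c ∈ (H : Set G) * N := by
    rw [← mul_normal, hHN]
    trivial
  have hna : n * a * n⁻¹ ∈ K := (hNK hn a).mp ha
  simpa [mul_assoc] using H.mul_mem (H.mul_mem hh (hKH hna)) (H.inv_mem hh)

end

theorem stmt5 {G : Type*} [Group G] (G1 G2 : Subgroup G) [Finite G1] [Finite G2]
    (hgen : G1 ⊔ G2 = ⊤)
    (h1 : (G1 ⊓ G2).relIndex G1 = 3) (h2 : (G1 ⊓ G2).relIndex G2 = 3)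
    (h2grp : IsPGroup 2 ↥(G1 ⊓ G2))
    (hnonorm : ∀ K : Subgroup G, K ≤ G1 ⊓ G2 → K.Normal → K = ⊥)
    (N : Subgroup G) (hN : N.Normal) (hON : oddCore G1 ⊔ oddCore G2 ≤ N) :
    (G1 ⊓ G2) ⊔ N = ⊤ ∧
    (N ⊓ G1) ⊔ (N ⊓ G2) = N ∧
    (N ⊓ (G1 ⊓ G2)).relIndex (N ⊓ G1) = 3 ∧
    (N ⊓ (G1 ⊓ G2)).relIndex (N ⊓ G2) = 3 ∧
    (∀ K : Subgroup G, K ≤ N ⊓ (G1 ⊓ G2) →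
      (∀ g ∈ N ⊓ G1, ∀ k ∈ K, g * k * g⁻¹ ∈ K) →
      (∀ g ∈ N ⊓ G2, ∀ k ∈ K, g * k * g⁻¹ ∈ K) → K = ⊥) := by
  set G12 := G1 ⊓ G2
  have hG1 : G12 ⊔ (N ⊓ G1) = G1 := sup_inf_eq_of_oddCore_le inf_le_left h2grp Nat.prime_three
    (by norm_num) h1 (le_sup_left.trans hON)
  have hG2 : G12 ⊔ (N ⊓ G2) = G2 := sup_inf_eq_of_oddCore_le inf_le_right h2grp Nat.prime_three
    (by norm_num) h2 (le_sup_right.trans hON)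
  have hN0 : (N ⊓ G1) ⊔ (N ⊓ G2) = N := inf_sup_inf_eq_self hgen hG1 hG2
  have hG12N : G12 ⊔ N = ⊤ := top_le_iff.mp <| hgen ▸
    sup_le (hG1 ▸ sup_le_sup_left inf_le_left G12) (hG2 ▸ sup_le_sup_left inf_le_left G12)
  have hGiN (Gi : Subgroup G) (hi : G12 ≤ Gi) : Gi ⊔ N = G12 ⊔ N :=
    (top_le_iff.mp (hG12N ▸ sup_le_sup_right hi N)).trans hG12N.symm
  have : Finite G12 := Finite.of_injective _ (inclusion_injective inf_le_left)
  have hN_fin : N.relIndex G12 ≠ 0 := index_ne_zero_of_finite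
  refine ⟨hG12N, hN0, ?_, ?_, fun K hK hK1 hK2 => ?_⟩
  · rw [relIndex_inf_inf_eq inf_le_left (hGiN G1 inf_le_left) hN_fin, h1]
  · rw [relIndex_inf_inf_eq inf_le_right (hGiN G2 inf_le_right) hN_fin, h2]
  have hNK : N ≤ normalizer K :=
    hN0 ▸ sup_le (le_normalizer_iff.mpr hK1) (le_normalizer_iff.mpr hK2)
  have hclosure := hnonorm _ (normalClosure_le_of_sup_eq_top hG12N (hK.trans inf_le_right) hNK)
    normalClosure_normal
  exact le_bot_iff.mp (hclosure ▸ le_normalClosure)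
end

section
/- Let q be an odd prime power with q ≡ 3 or 5 (mod 8). Then a Sylow 2-subgroup of PSL(2,q) is a Klein four group (elementary abelian of order 4). -/
open Matrix

section Aux

variable {F : Type*} [Field F]

local notation "SL" => Matrix.SpecialLinearGroup (Fin 2) F

private lemma CH2aux (M : Matrix (Fin 2) (Fin 2) F) :
    M * M = (M 0 0 + M 1 1) • M - (M.det) • 1 := by
  ext i j
  fin_cases i <;> fin_cases j <;>
    simp [Matrix.mul_apply, Fin.sum_univ_succ, Matrix.det_fin_two, Matrix.one_apply] <;> ring

private lemma scalar_pm_aux {M : Matrix (Fin 2) (Fin 2) F} {c : F}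
    (hM : M = c • (1 : Matrix (Fin 2) (Fin 2) F))
    (hd : M.det = 1) : M = 1 ∨ M = -1 := by
  have h2 : c * c = 1 := by
    have := hd
    rw [hM, Matrix.det_smul, Matrix.det_one, mul_one] at this
    simpa [sq] using this
  rcases mul_self_eq_one_iff.mp h2 with h | h
  · left; rw [hM, h, one_smul]
  · right
    rw [hM, h]
    ext i j
    by_cases hij : i = j <;> simp [Matrix.one_apply, hij]

private lemma smul_eq_smul_one_aux {M : Matrix (Fin 2) (Fin 2) F} {s d : F} (hd : d ≠ 0)
    (h : s • M = d • (1 : Matrix (Fin 2) (Fin 2) F)) :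
    M = (s⁻¹ * d) • (1 : Matrix (Fin 2) (Fin 2) F) := by
  have hs : s ≠ 0 := by
    rintro rfl
    have := congrFun (congrFun h 0) 0
    simp at this
    exact hd this.symm
  calc M = s⁻¹ • (s • M) := by rw [inv_smul_smul₀ hs]
    _ = s⁻¹ • (d • (1 : Matrix (Fin 2) (Fin 2) F)) := by rw [h]
    _ = (s⁻¹ * d) • (1 : Matrix (Fin 2) (Fin 2) F) := by rw [smul_smul]

private lemma order_two_case_aux (h2 : (2 : F) ≠ 0) {M : Matrix (Fin 2) (Fin 2) F}
    (hd : M.det = 1) (h : M * M = 1) : M = 1 ∨ M = -1 := by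
  have hch := CH2aux M
  rw [h, hd, one_smul] at hch
  have h' : (M 0 0 + M 1 1) • M = (2 : F) • (1 : Matrix (Fin 2) (Fin 2) F) := by
    linear_combination (norm := module) -hch
  exact scalar_pm_aux (smul_eq_smul_one_aux h2 h') hd

private lemma entry_ne_aux (h2 : (2 : F) ≠ 0) :
    ¬ ((1 : Matrix (Fin 2) (Fin 2) F) = -1) := by
  intro h
  have := congrFun (congrFun h 0) 0
  simp at this
  exact h2 (by linear_combination this)

private lemma order_eight_case_aux (h2 : (2 : F) ≠ 0) (hns : ¬ IsSquare (2 : F))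
    {M : Matrix (Fin 2) (Fin 2) F} (hd : M.det = 1) (h : M ^ 4 = -1) : False := by
  set t := M 0 0 + M 1 1 with ht
  have hch : M * M = t • M - 1 := by rw [CH2aux M, hd, one_smul]
  have e : M ^ 4 = t • (t • (t • M - 1) - M) - (t • M - 1) := by
    rw [show M ^ 4 = (M * M) * (M * M) by rw [show (4:ℕ) = 2*2 from rfl, pow_mul, pow_two,
      pow_two], hch, sub_mul, one_mul, smul_mul_assoc, mul_sub, mul_one, mul_smul_comm, hch]
  have key : (t ^ 3 - 2 * t) • M = (t ^ 2 - 2) • (1 : Matrix (Fin 2) (Fin 2) F) := by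
    linear_combination (norm := module) h - e
  by_cases hts : t ^ 2 - 2 = 0
  · exact hns ⟨t, by linear_combination -hts - sq t⟩
  · rcases scalar_pm_aux (smul_eq_smul_one_aux hts key) hd with h1 | h1 <;> rw [h1] at h
    · exact entry_ne_aux h2 (by simpa using h)
    · rw [show ((-1 : Matrix (Fin 2) (Fin 2) F)) ^ 4 = 1 by norm_num] at h
      exact entry_ne_aux h2 h

private instance : Fact (Even (Fintype.card (Fin 2))) := ⟨1, rfl⟩

private lemma center_elts_aux {A : SL} (hA : A ∈ Subgroup.center SL) : A = 1 ∨ A = -1 := by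
  obtain ⟨r, hr1, hr2⟩ := Matrix.SpecialLinearGroup.mem_center_iff.mp hA
  rw [Fintype.card_fin, sq] at hr1
  rcases mul_self_eq_one_iff.mp hr1 with h | h <;> subst h <;> [left; right] <;>
    apply Subtype.ext <;> rw [← hr2]
  · simp [Matrix.SpecialLinearGroup.coe_one]
  · rw [map_neg, _root_.map_one, Matrix.SpecialLinearGroup.coe_neg,
      Matrix.SpecialLinearGroup.coe_one]

private lemma neg_one_mem_center_aux : (-1 : SL) ∈ Subgroup.center SL :=
  Matrix.SpecialLinearGroup.mem_center_iff.mpr ⟨-1, by norm_num [Fintype.card_fin], by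
    rw [map_neg, _root_.map_one, Matrix.SpecialLinearGroup.coe_neg,
      Matrix.SpecialLinearGroup.coe_one]⟩

private lemma quot_sq_aux (h2 : (2 : F) ≠ 0) (hns : ¬ IsSquare (2 : F))
    (x : SL ⧸ Subgroup.center SL) (hx : x ^ 4 = 1) : x ^ 2 = 1 := by
  obtain ⟨g, rfl⟩ := QuotientGroup.mk_surjective x
  have h4 : g ^ 4 ∈ Subgroup.center SL := by
    rwa [← QuotientGroup.eq_one_iff, QuotientGroup.mk_pow]
  rw [← QuotientGroup.mk_pow, QuotientGroup.eq_one_iff]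
  rcases center_elts_aux h4 with h | h
  · have hM : ((g ^ 2 : SL) : Matrix (Fin 2) (Fin 2) F) * ((g ^ 2 : SL) : Matrix (Fin 2) (Fin 2) F)
        = 1 := by
      rw [← Matrix.SpecialLinearGroup.coe_mul, ← pow_add, h, Matrix.SpecialLinearGroup.coe_one]
    rcases order_two_case_aux h2 ((g ^ 2).2) hM with h' | h'
    · rw [show g ^ 2 = 1 from Subtype.ext (by rw [h', Matrix.SpecialLinearGroup.coe_one])]
      exact Subgroup.one_mem _
    · rw [show g ^ 2 = -1 from Subtype.ext (by
        rw [h', Matrix.SpecialLinearGroup.coe_neg, Matrix.SpecialLinearGroup.coe_one])]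
      exact neg_one_mem_center_aux
  · exact absurd trivial (fun _ => order_eight_case_aux h2 hns g.2 (by
      rw [← Matrix.SpecialLinearGroup.coe_pow, h, Matrix.SpecialLinearGroup.coe_neg,
        Matrix.SpecialLinearGroup.coe_one]))

private lemma quot_sq_pow_aux (h2 : (2 : F) ≠ 0) (hns : ¬ IsSquare (2 : F)) :
    ∀ (k : ℕ) (x : SL ⧸ Subgroup.center SL), x ^ 2 ^ k = 1 → x ^ 2 = 1 := by
  intro k
  induction k with
  | zero => intro x hx; simp only [pow_zero, pow_one] at hx; rw [hx]; simp
  | succ k ih =>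
    intro x hx
    have h1 : (x ^ 2) ^ 2 ^ k = 1 := by
      rw [← pow_mul, ← pow_succ']
      exact hx
    have h4 : x ^ 4 = 1 := by
      have := ih (x ^ 2) h1
      rw [← pow_mul] at this
      exact this
    exact quot_sq_aux h2 hns x h4

variable [Fintype F]

private noncomputable def slEquivKer_aux :
    SL ≃ (Matrix.GeneralLinearGroup.det (n := Fin 2) (R := F)).ker where
  toFun g := ⟨Matrix.SpecialLinearGroup.toGL g, by
    simp only [MonoidHom.mem_ker]
    ext
    simp [Matrix.GeneralLinearGroup.val_det_apply, Matrix.SpecialLinearGroup.toGL, g.2]⟩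
  invFun A := ⟨(A.1 : Matrix (Fin 2) (Fin 2) F), by
    have := A.2
    rw [MonoidHom.mem_ker] at this
    have := congrArg Units.val this
    simpa [Matrix.GeneralLinearGroup.val_det_apply] using this⟩
  left_inv g := rfl
  right_inv A := by
    apply Subtype.ext
    apply Units.ext
    rfl

private lemma det_GL_surj_aux :
    Function.Surjective (Matrix.GeneralLinearGroup.det (n := Fin 2) (R := F)) := by
  intro u
  refine ⟨⟨Matrix.diagonal ![u.1, 1], Matrix.diagonal ![u.2, 1], ?_, ?_⟩, ?_⟩
  · rw [Matrix.diagonal_mul_diagonal]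
    convert Matrix.diagonal_one with i
    fin_cases i <;> simp
  · rw [Matrix.diagonal_mul_diagonal]
    convert Matrix.diagonal_one with i
    fin_cases i <;> simp
  · ext
    simp [Matrix.GeneralLinearGroup.val_det_apply, Matrix.det_diagonal, Fin.prod_univ_succ]

private lemma card_SL_aux : Nat.card SL * (Fintype.card F - 1) =
    (Fintype.card F ^ 2 - 1) * (Fintype.card F ^ 2 - Fintype.card F) := by
  have h1 := Matrix.card_GL_field (𝔽 := F) 2
  rw [Fin.prod_univ_succ, Fin.prod_univ_succ] at h1
  simp only [Fin.prod_univ_zero, mul_one, pow_zero, pow_one] at h1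
  have h2 : Nat.card (GL (Fin 2) F) =
      Nat.card (Matrix.GeneralLinearGroup.det (n := Fin 2) (R := F)).ker * Nat.card Fˣ := by
    rw [Subgroup.card_eq_card_quotient_mul_card_subgroup
      (Matrix.GeneralLinearGroup.det (n := Fin 2) (R := F)).ker, mul_comm]
    congr 1
    · exact Nat.card_congr (QuotientGroup.quotientKerEquivOfSurjective _ det_GL_surj_aux).toEquiv
  have h3 : Nat.card Fˣ = Fintype.card F - 1 := by
    classical rw [Nat.card_eq_fintype_card, Fintype.card_units]
  rw [← Nat.card_congr (slEquivKer_aux (F := F)), h3] at h2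
  rw [← h2, h1]
  norm_num

private lemma card_center_aux (h2 : ringChar F ≠ 2) :
    Nat.card (Subgroup.center SL) = 2 := by
  classical
  have hprim : IsPrimitiveRoot (-1 : F) 2 := IsPrimitiveRoot.neg_one (ringChar F) h2
  have hc := hprim.card_rootsOfUnity
  rw [Nat.card_congr
    (Matrix.SpecialLinearGroup.center_equiv_rootsOfUnity' (R := F) (0 : Fin 2)).toEquiv]
  simp only [Fintype.card_fin, Nat.card_eq_fintype_card]
  convert hc
  rw [← Nat.card_eq_fintype_card]

private lemma card_quot_aux (h2 : ringChar F ≠ 2) :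
    Nat.card (SL ⧸ Subgroup.center SL) * 2 =
      Fintype.card F * (Fintype.card F - 1) * (Fintype.card F + 1) := by
  set q := Fintype.card F with hq
  have hq2 : 2 ≤ q := Fintype.one_lt_card
  have h1 : Nat.card SL = Nat.card (SL ⧸ Subgroup.center SL) * 2 := by
    rw [Subgroup.card_eq_card_quotient_mul_card_subgroup (Subgroup.center SL),
      card_center_aux h2]
  have h2' : (q ^ 2 - 1) * (q ^ 2 - q) = q * (q - 1) * (q + 1) * (q - 1) := by
    have e1 : q ^ 2 - 1 = (q + 1) * (q - 1) := by
      rw [← Nat.sq_sub_sq]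
    have e2 : q ^ 2 - q = q * (q - 1) := by
      rw [Nat.mul_sub, mul_one, sq]
    rw [e1, e2]
    ring
  have key := card_SL_aux (F := F)
  rw [h2', h1] at key
  exact Nat.eq_of_mul_eq_mul_right (by omega) key

private lemma nat_split_aux {q : ℕ} (h : q % 8 = 3 ∨ q % 8 = 5) :
    ∃ m, Odd m ∧ q * (q - 1) * (q + 1) = 8 * m := by
  rcases h with h | h
  · obtain ⟨k, rfl⟩ : ∃ k, q = 8 * k + 3 := ⟨q / 8, by omega⟩
    refine ⟨(8*k+3)*(4*k+1)*(2*k+1), ⟨?_, ?_⟩⟩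
    · exact (Odd.mul (Odd.mul ⟨4*k+1, by ring⟩ ⟨2*k, by ring⟩) ⟨k, by ring⟩)
    · have e1 : 8*k+3-1 = 8*k+2 := by omega
      rw [e1]; ring
  · obtain ⟨k, rfl⟩ : ∃ k, q = 8 * k + 5 := ⟨q / 8, by omega⟩
    refine ⟨(8*k+5)*(2*k+1)*(4*k+3), ⟨?_, ?_⟩⟩
    · exact (Odd.mul (Odd.mul ⟨4*k+2, by ring⟩ ⟨k, by ring⟩) ⟨2*k+1, by ring⟩)
    · have e1 : 8*k+5-1 = 8*k+4 := by omega
      rw [e1]; ring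

private lemma val2_aux {N m : ℕ} (hm : Odd m) (h : N = 4 * m) :
    N.factorization 2 = 2 := by
  subst h
  have hm0 : m ≠ 0 := by rintro rfl; simpa [Nat.odd_iff] using hm
  rw [show 4 * m = 2 ^ 2 * m by ring, Nat.factorization_mul (by positivity) hm0]
  rw [Finsupp.add_apply, Nat.Prime.factorization_pow Nat.prime_two, Finsupp.single_eq_same,
    Nat.factorization_eq_zero_of_not_dvd (by
      rw [Nat.odd_iff] at hm
      omega)]

end Aux

theorem stmt17 (q : ℕ) (hq : Odd q) (hmod : q % 8 = 3 ∨ q % 8 = 5)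
    (F : Type*) [Field F] [Fintype F] (hF : Fintype.card F = q)
    (S : Sylow 2 (Matrix.SpecialLinearGroup (Fin 2) F ⧸
      Subgroup.center (Matrix.SpecialLinearGroup (Fin 2) F))) :
    Nonempty (↥(S : Subgroup (Matrix.SpecialLinearGroup (Fin 2) F ⧸
        Subgroup.center (Matrix.SpecialLinearGroup (Fin 2) F))) ≃*
      Multiplicative (ZMod 2) × Multiplicative (ZMod 2)) := by
  classical
  haveI : Fact (Nat.Prime 2) := ⟨Nat.prime_two⟩
  have hq8 : Fintype.card F % 8 = 3 ∨ Fintype.card F % 8 = 5 := by rw [hF]; exact hmod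
  have hns : ¬ IsSquare (2 : F) := by
    intro h
    obtain ⟨h3, h5⟩ := FiniteField.isSquare_two_iff.mp h
    rcases hq8 with h' | h' <;> [exact h3 h'; exact h5 h']
  have h2F : (2 : F) ≠ 0 := fun h => hns ⟨0, by rw [h]; ring⟩
  have hchar : ringChar F ≠ 2 := by
    intro h
    apply h2F
    have : ((2 : ℕ) : F) = 0 :=
      (CharP.cast_eq_zero_iff F (ringChar F) 2).mpr (by rw [h])
    exact_mod_cast this
  -- cardinality of the Sylow subgroup
  obtain ⟨m, hmodd, hm⟩ := nat_split_aux hq8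
  have hcardQ := card_quot_aux (F := F) hchar
  rw [hm] at hcardQ
  have hQ4 : Nat.card (Matrix.SpecialLinearGroup (Fin 2) F ⧸
      Subgroup.center (Matrix.SpecialLinearGroup (Fin 2) F)) = 4 * m := by omega
  have hcardS : Nat.card ↥(S : Subgroup (Matrix.SpecialLinearGroup (Fin 2) F ⧸
      Subgroup.center (Matrix.SpecialLinearGroup (Fin 2) F))) = 4 := by
    rw [Sylow.card_eq_multiplicity, hQ4, val2_aux hmodd rfl]
    norm_num
  -- exponent two
  have hpow : ∀ y : ↥(S : Subgroup (Matrix.SpecialLinearGroup (Fin 2) F ⧸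
      Subgroup.center (Matrix.SpecialLinearGroup (Fin 2) F))), y ^ 2 = 1 := by
    intro y
    obtain ⟨k, hk⟩ := S.2 y
    have hcy : ((y : Matrix.SpecialLinearGroup (Fin 2) F ⧸
        Subgroup.center (Matrix.SpecialLinearGroup (Fin 2) F))) ^ 2 ^ k = 1 := by
      have := congrArg Subtype.val hk
      simpa using this
    have h2 := quot_sq_pow_aux h2F hns k _ hcy
    apply Subtype.ext
    simpa using h2
  have hnontriv : Nontrivial ↥(S : Subgroup (Matrix.SpecialLinearGroup (Fin 2) F ⧸
      Subgroup.center (Matrix.SpecialLinearGroup (Fin 2) F))) := by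
    apply Finite.one_lt_card_iff_nontrivial.mp
    omega
  have hexp : Monoid.exponent ↥(S : Subgroup (Matrix.SpecialLinearGroup (Fin 2) F ⧸
      Subgroup.center (Matrix.SpecialLinearGroup (Fin 2) F))) = 2 := by
    have hdvd := Monoid.exponent_dvd_of_forall_pow_eq_one hpow
    rcases (Nat.dvd_prime Nat.prime_two).mp hdvd with h | h
    · rw [Monoid.exp_eq_one_iff] at h
      exact absurd h (not_subsingleton _)
    · exact h
  haveI : IsKleinFour ↥(S : Subgroup (Matrix.SpecialLinearGroup (Fin 2) F ⧸
      Subgroup.center (Matrix.SpecialLinearGroup (Fin 2) F))) := ⟨hcardS, hexp⟩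
  obtain ⟨e⟩ := IsKleinFour.nonempty_mulEquiv
    (G₁ := ↥(S : Subgroup (Matrix.SpecialLinearGroup (Fin 2) F ⧸
      Subgroup.center (Matrix.SpecialLinearGroup (Fin 2) F))))
    (G₂ := Multiplicative (ZMod 2 × ZMod 2))
  exact ⟨e.trans (MulEquiv.prodMultiplicative (G := ZMod 2) (H := ZMod 2))⟩
end

section
/- Let G be a finite group with a subgroup G_1 of index n in G such that G_1 is maximal in G and C_G(O_3(G_1)) ≤ G_1, where G_1 ≅ Sym(3). If G is not simple and has a proper non-trivial normal subgroup R with G = G_1 R and C_R(G_1) = 1, then R is nilpotent. -/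
/-!
Conjugation by a generator `q` of `Q` is an automorphism of `R` whose cube is the identity, and
it is fixed-point-free because `C_G(Q) ≤ G₁` and `G₁ ∩ R = 1`. By Burnside's theorem a finite
group with such an automorphism `φ` is nilpotent of class at most 2: every element has the form
`g φ(g)⁻¹`, whence `g φ(g) φ²(g) = 1` and `g` commutes with `φ(g)`. Applied to `x⁻¹ y` this gives
`[x, φ y] = [φ x, y]`, and expanding `[w x, φ y]` in both ways shows that `[x, φ y]` commutes with
every `w φ(w)⁻¹`, that is, with everything.
-/

open scoped commutatorElement

theorem Group.isNilpotent_of_forall_commutatorElement_mem_center {G : Type*} [Group G]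
    (h : ∀ a b : G, ⁅a, b⁆ ∈ Subgroup.center G) : Group.IsNilpotent G :=
  Subgroup.isNilpotent_of_ker_le_center Abelianization.of <| by
    rw [Abelianization.ker_of, _root_.commutator_def, Subgroup.commutator_le]
    exact fun a _ b _ => h a b

namespace MonoidHom.FixedPointFree

variable {F G : Type*} [Group G] [Finite G] [FunLike F G G] [MonoidHomClass F G G] {φ : F}

theorem mul_apply_mul_apply_apply_eq_one (hφ : FixedPointFree φ) (h3 : φ^[3] = _root_.id)
    (g : G) : g * φ g * φ (φ g) = 1 := by
  simpa [List.range_succ, mul_assoc] using hφ.prod_pow_eq_one h3 g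

theorem commute_apply (hφ : FixedPointFree φ) (h3 : φ^[3] = _root_.id) (g : G) :
    Commute g (φ g) := by
  have h₁ := hφ.mul_apply_mul_apply_apply_eq_one h3 g
  have h₂ := hφ.mul_apply_mul_apply_apply_eq_one h3 g⁻¹
  rw [map_inv, map_inv, ← mul_inv_rev, ← mul_inv_rev, inv_eq_one] at h₂
  exact inv_injective ((eq_inv_of_mul_eq_one_right h₁).symm.trans (eq_inv_of_mul_eq_one_left h₂))

theorem commutatorElement_apply_right_eq_apply_left (hφ : FixedPointFree φ)
    (h3 : φ^[3] = _root_.id) (x y : G) : ⁅x, φ y⁆ = ⁅φ x, y⁆ := by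
  have hx := (hφ.commute_apply h3 x).eq
  have hy := (hφ.commute_apply h3 y).eq
  have hxy := (hφ.commute_apply h3 (x⁻¹ * y)).eq
  rw [map_mul, map_inv] at hxy
  have key : φ x * y * (φ x)⁻¹ * φ y = x * φ y * x⁻¹ * y :=
    calc φ x * y * (φ x)⁻¹ * φ y = φ x * x * (x⁻¹ * y * ((φ x)⁻¹ * φ y)) := by group
      _ = φ x * x * ((φ x)⁻¹ * φ y * (x⁻¹ * y)) := by rw [hxy]
      _ = x * φ x * (φ x)⁻¹ * φ y * x⁻¹ * y := by rw [hx]; group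
      _ = x * φ y * x⁻¹ * y := by group
  calc ⁅x, φ y⁆ = x * φ y * x⁻¹ * y * (φ y * y)⁻¹ := by group
    _ = φ x * y * (φ x)⁻¹ * φ y * (y * φ y)⁻¹ := by rw [← key, hy]
    _ = ⁅φ x, y⁆ := by group

theorem commutatorElement_apply_right_mem_center (hφ : FixedPointFree φ)
    (h3 : φ^[3] = _root_.id) (x y : G) : ⁅x, φ y⁆ ∈ Subgroup.center G := by
  have hswap := hφ.commutatorElement_apply_right_eq_apply_left h3
  have hconj (w : G) : w * ⁅x, φ y⁆ * w⁻¹ = φ w * ⁅x, φ y⁆ * (φ w)⁻¹ := by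
    refine mul_right_cancel (b := ⁅w, φ y⁆) ?_
    calc w * ⁅x, φ y⁆ * w⁻¹ * ⁅w, φ y⁆ = ⁅w * x, φ y⁆ :=
          (commutatorElement_mul_left_eq_conj_mul w x (φ y)).symm
      _ = ⁅φ w * φ x, y⁆ := by rw [hswap, map_mul]
      _ = φ w * ⁅φ x, y⁆ * (φ w)⁻¹ * ⁅φ w, y⁆ := commutatorElement_mul_left_eq_conj_mul _ _ _
      _ = φ w * ⁅x, φ y⁆ * (φ w)⁻¹ * ⁅w, φ y⁆ := by rw [hswap, hswap]
  refine Subgroup.mem_center_iff.mpr fun g => ?_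
  obtain ⟨w, rfl⟩ := hφ.commutatorMap_surjective g
  have hw := hconj w⁻¹
  rw [map_inv, inv_inv, inv_inv] at hw
  rw [commutatorMap_apply, div_eq_mul_inv]
  calc w * (φ w)⁻¹ * ⁅x, φ y⁆ = w * ((φ w)⁻¹ * ⁅x, φ y⁆ * φ w) * (φ w)⁻¹ := by group
    _ = w * (w⁻¹ * ⁅x, φ y⁆ * w) * (φ w)⁻¹ := by rw [← hw]
    _ = ⁅x, φ y⁆ * (w * (φ w)⁻¹) := by group

theorem isNilpotent (hφ : FixedPointFree φ) (h3 : φ^[3] = _root_.id) : Group.IsNilpotent G :=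
  Group.isNilpotent_of_forall_commutatorElement_mem_center fun a b => by
    have hb : φ (φ (φ b)) = b := congrFun h3 b
    simpa only [hb] using hφ.commutatorElement_apply_right_mem_center h3 a (φ (φ b))

end MonoidHom.FixedPointFree

namespace MulAut

variable {G : Type*} [Group G] {R : Subgroup G} [R.Normal] {g : G}

theorem fixedPointFree_conjNormal (h : Subgroup.centralizer {g} ⊓ R = ⊥) :
    MonoidHom.FixedPointFree (conjNormal g : MulAut R) := by
  intro x hx
  have hcomm : (x : G) ∈ Subgroup.centralizer {g} := by
    rw [Subgroup.mem_centralizer_singleton_iff]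
    exact (mul_inv_eq_iff_eq_mul.mp (congrArg Subtype.val hx)).symm
  have hbot : (x : G) ∈ Subgroup.centralizer {g} ⊓ R := ⟨hcomm, x.2⟩
  rw [h, Subgroup.mem_bot] at hbot
  exact Subtype.ext hbot

theorem iterate_conjNormal_eq_id {n : ℕ} (hg : g ^ n = 1) :
    (⇑(conjNormal g : MulAut R))^[n] = _root_.id := by
  rw [← hom_coe_pow (fun e : MulAut R => ⇑e) rfl (fun _ _ => rfl), ← map_pow, hg, map_one]
  rfl

end MulAut

theorem stmt18_general {G : Type*} [Group G] [Finite G] (G1 R Q : Subgroup G)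
    (hQcard : Nat.card ↥Q = 3)
    (hcent : Subgroup.centralizer (Q : Set G) ≤ G1)
    (hRnormal : R.Normal)
    (hint : G1 ⊓ R = ⊥) :
    Group.IsNilpotent ↥R := by
  have : Fact (Nat.Prime 3) := ⟨Nat.prime_three⟩
  obtain ⟨q, rfl⟩ := Q.isCyclic_iff_exists_zpowers_eq_top.mp (isCyclic_of_prime_card hQcard)
  rw [Nat.card_zpowers] at hQcard
  rw [Subgroup.zpowers_eq_closure, Subgroup.centralizer_closure] at hcent
  have hfpf : Subgroup.centralizer {q} ⊓ R = ⊥ :=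
    le_bot_iff.mp (hint ▸ inf_le_inf_right R hcent)
  exact (MulAut.fixedPointFree_conjNormal hfpf).isNilpotent
    (MulAut.iterate_conjNormal_eq_id (hQcard ▸ pow_orderOf_eq_one q))

theorem stmt18 {G : Type*} [Group G] [Finite G] (G1 R Q : Subgroup G)
    (hS3 : Nonempty (↥G1 ≃* Equiv.Perm (Fin 3)))
    (hmax : IsCoatom G1)
    (hQle : Q ≤ G1) (hQcard : Nat.card ↥Q = 3) (hQ3 : IsPGroup 3 ↥Q)
    (hQnorm : ∀ g ∈ G1, ∀ q ∈ Q, g * q * g⁻¹ ∈ Q)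
    (hcent : Subgroup.centralizer (Q : Set G) ≤ G1)
    (hnotsimple : ¬ IsSimpleGroup G)
    (hRnormal : R.Normal) (hRne : R ≠ ⊥) (hRproper : R ≠ ⊤)
    (hprod : G1 ⊔ R = ⊤) (hint : G1 ⊓ R = ⊥)
    (hCR : Subgroup.centralizer (G1 : Set G) ⊓ R = ⊥) :
    Group.IsNilpotent ↥R :=
  stmt18_general G1 R Q hQcard hcent hRnormal hint
end
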